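/- arXiv:2201.08479 — 5 statements merged into one kernel-verified Lean document; each statement's English description precedes it below -/
import Mathlib

section
/- Two polyadic semigroups of arities n₁ and n₂ admit a mixed-arity iterated direct product of arity n' if and only if n' - 1 is a common multiple of n₁ - 1 and n₂ - 1; in particular, the minimal nonderived such arity is n' = lcm(n₁-1, n₂-1) + 1. -/
/-- Two polyadic semigroups of arities n₁, n₂ admit a mixed-arity
iterated direct product of arity n' (i.e. there are positive numbers of
iterations ℓ₁, ℓ₂ with n' = ℓ₁(n₁-1)+1 = ℓ₂(n₂-1)+1) iff n'-1 is a (positive)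
common multiple of n₁-1 and n₂-1; moreover the minimal such arity is
n' = lcm(n₁-1, n₂-1) + 1. -/
theorem mixed_arity_compatibility (n₁ n₂ : ℕ) (h₁ : 2 ≤ n₁) (h₂ : 2 ≤ n₂) :
    (∀ n' : ℕ,
      (∃ ℓ₁ ℓ₂ : ℕ, 0 < ℓ₁ ∧ 0 < ℓ₂ ∧
          n' = ℓ₁ * (n₁ - 1) + 1 ∧ n' = ℓ₂ * (n₂ - 1) + 1) ↔
      (2 ≤ n' ∧ (n₁ - 1) ∣ (n' - 1) ∧ (n₂ - 1) ∣ (n' - 1))) ∧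
    (∃ ℓ₁ ℓ₂ : ℕ, 0 < ℓ₁ ∧ 0 < ℓ₂ ∧
        Nat.lcm (n₁ - 1) (n₂ - 1) + 1 = ℓ₁ * (n₁ - 1) + 1 ∧
        Nat.lcm (n₁ - 1) (n₂ - 1) + 1 = ℓ₂ * (n₂ - 1) + 1) ∧
    (∀ n' : ℕ,
      (∃ ℓ₁ ℓ₂ : ℕ, 0 < ℓ₁ ∧ 0 < ℓ₂ ∧
          n' = ℓ₁ * (n₁ - 1) + 1 ∧ n' = ℓ₂ * (n₂ - 1) + 1) →
      Nat.lcm (n₁ - 1) (n₂ - 1) + 1 ≤ n') := by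
  have p₁ : 0 < n₁ - 1 := by omega
  have p₂ : 0 < n₂ - 1 := by omega
  have plcm : 0 < Nat.lcm (n₁ - 1) (n₂ - 1) := Nat.lcm_pos p₁ p₂
  have key : ∀ n' : ℕ,
      (∃ ℓ₁ ℓ₂ : ℕ, 0 < ℓ₁ ∧ 0 < ℓ₂ ∧
          n' = ℓ₁ * (n₁ - 1) + 1 ∧ n' = ℓ₂ * (n₂ - 1) + 1) ↔
      (2 ≤ n' ∧ (n₁ - 1) ∣ (n' - 1) ∧ (n₂ - 1) ∣ (n' - 1)) := by
    intro n'
    constructor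
    · rintro ⟨l1, l2, hl1, hl2, e1, e2⟩
      have m1 : 0 < l1 * (n₁ - 1) := Nat.mul_pos hl1 p₁
      have m2 : 0 < l2 * (n₂ - 1) := Nat.mul_pos hl2 p₂
      exact ⟨by omega, ⟨l1, by rw [Nat.mul_comm]; omega⟩,
        ⟨l2, by rw [Nat.mul_comm]; omega⟩⟩
    · rintro ⟨hn, ⟨l1, e1⟩, ⟨l2, e2⟩⟩
      rw [Nat.mul_comm] at e1 e2
      have hl1 : 0 < l1 := by
        rcases Nat.eq_zero_or_pos l1 with h | h
        · simp [h] at e1; omega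
        · exact h
      have hl2 : 0 < l2 := by
        rcases Nat.eq_zero_or_pos l2 with h | h
        · simp [h] at e2; omega
        · exact h
      exact ⟨l1, l2, hl1, hl2, by omega, by omega⟩
  refine ⟨key, ?_, ?_⟩
  · rw [key]
    exact ⟨by omega, Nat.dvd_lcm_left _ _, Nat.dvd_lcm_right _ _⟩
  · intro n' h
    rw [key] at h
    have := Nat.lcm_dvd h.2.1 h.2.2
    have := Nat.le_of_dvd (by omega) this
    omega
end

section
/- The hetero power arity-changing formula: if an n-ary semigroup is raised to the Cartesian k-th power with ℓ_id intact elements per k-tuple and ℓ_μ = k - ℓ_id multiplications, the resulting arity n' satisfies n' = n - ((n-1)/k)·ℓ_id, and necessarily 0 ≤ ℓ_id ≤ k-1, ℓ_μ ≤ k ≤ (n-1)ℓ_μ, and 2 ≤ n' ≤ n. -/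
/-- the hetero power arity-changing formula. If an n-ary semigroup
is raised to the Cartesian k-th power, with ℓid intact elements and
ℓμ = k - ℓid multiplications per k-tuple (counting relations k·n' = ℓμ·n + ℓid
and k = ℓμ + ℓid, ℓμ ≥ 1, with n, n', k ≥ 2 and k ∣ (n-1)·ℓid), then
n' = n - ((n-1)/k)·ℓid, and 0 ≤ ℓid ≤ k-1, ℓμ ≤ k ≤ (n-1)·ℓμ, 2 ≤ n' ≤ n. -/
theorem hetero_power_arity_formula (n n' k ℓμ ℓid : ℕ)
    (hn : 2 ≤ n) (hn' : 2 ≤ n') (hk : 2 ≤ k)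
    (hμ : 1 ≤ ℓμ)
    (hcount : k * n' = ℓμ * n + ℓid)
    (hsum : k = ℓμ + ℓid)
    (hdvd : k ∣ (n - 1) * ℓid) :
    n' = n - (n - 1) * ℓid / k ∧
    ℓid ≤ k - 1 ∧
    ℓμ ≤ k ∧ k ≤ (n - 1) * ℓμ ∧
    2 ≤ n' ∧ n' ≤ n := by
  obtain ⟨d, hd⟩ := hdvd
  have hm : n - 1 + 1 = n := by omega
  have hkn : k * n = k * n' + k * d := by
    calc k * n = (ℓμ + ℓid) * ((n-1)+1) := by rw [← hsum, hm]
    _ = (ℓμ * n + ℓid) + (n-1) * ℓid := by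
        rw [Nat.mul_add, Nat.mul_one, Nat.add_mul]
        nlinarith [hm]
    _ = k * n' + k * d := by rw [← hcount, hd]
  have hnn' : n = n' + d := by
    have hkn2 : k * n = k * (n' + d) := by rw [Nat.mul_add]; exact hkn
    exact Nat.eq_of_mul_eq_mul_left (by omega) hkn2
  have hdval : (n - 1) * ℓid / k = d := by
    rw [hd]; exact Nat.mul_div_cancel_left d (by omega)
  have hkey : k * (n' - 1) = ℓμ * (n - 1) := by
    have : k * n' = ℓμ * (n - 1) + k := by
      calc k * n' = ℓμ * ((n-1)+1) + ℓid := by rw [hm]; exact hcount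
      _ = ℓμ * (n-1) + (ℓμ + ℓid) := by ring
      _ = ℓμ * (n-1) + k := by rw [← hsum]
    have h2 : k * (n' - 1) + k = k * n' := by
      rw [Nat.mul_sub, Nat.mul_one]; omega
    omega
  have hkle : k ≤ (n - 1) * ℓμ := by
    calc k = k * 1 := (Nat.mul_one k).symm
    _ ≤ k * (n' - 1) := Nat.mul_le_mul_left k (by omega)
    _ = (n - 1) * ℓμ := by rw [hkey, Nat.mul_comm]
  refine ⟨by omega, by omega, by omega, hkle, hn', by omega⟩
end

section
/- If (G, μ) is a ternary semigroup, the ternary operation on G × G given by μ'[(a₁,a₂),(b₁,b₂),(c₁,c₂)] = (μ[a₁,b₂,c₁], μ[a₂,b₁,c₂]) is totally associative, so this hetero cube construction yields a ternary semigroup on G × G. -/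
/-- if (G, μ) is a ternary semigroup, the noncomponentwise
ternary operation μ'[(a₁,a₂),(b₁,b₂),(c₁,c₂)] = (μ[a₁,b₂,c₁], μ[a₂,b₁,c₂]) on
G × G is totally associative. -/
theorem hetero_cube_totAssoc {G : Type*} (μ : G → G → G → G)
    (hassoc : ∀ a b c d e : G,
      μ (μ a b c) d e = μ a (μ b c d) e ∧ μ a (μ b c d) e = μ a b (μ c d e)) :
    ∀ A B C D E : G × G,
      (fun X Y Z : G × G => (μ X.1 Y.2 Z.1, μ X.2 Y.1 Z.2))
        ((fun X Y Z : G × G => (μ X.1 Y.2 Z.1, μ X.2 Y.1 Z.2)) A B C) D E =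
      (fun X Y Z : G × G => (μ X.1 Y.2 Z.1, μ X.2 Y.1 Z.2)) A
        ((fun X Y Z : G × G => (μ X.1 Y.2 Z.1, μ X.2 Y.1 Z.2)) B C D) E ∧
      (fun X Y Z : G × G => (μ X.1 Y.2 Z.1, μ X.2 Y.1 Z.2)) A
        ((fun X Y Z : G × G => (μ X.1 Y.2 Z.1, μ X.2 Y.1 Z.2)) B C D) E =
      (fun X Y Z : G × G => (μ X.1 Y.2 Z.1, μ X.2 Y.1 Z.2)) A B
        ((fun X Y Z : G × G => (μ X.1 Y.2 Z.1, μ X.2 Y.1 Z.2)) C D E) := by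
  intro A B C D E
  simp only [Prod.mk.injEq]
  exact ⟨⟨(hassoc _ _ _ _ _).1, (hassoc _ _ _ _ _).1⟩,
         ⟨(hassoc _ _ _ _ _).2, (hassoc _ _ _ _ _).2⟩⟩
end

section
/- If (G, μ) is a 4-ary semigroup, the 4-ary operation on G³ defined by the Post-like associativity quiver μ'[(a₁,a₂,a₃),(b₁,b₂,b₃),(c₁,c₂,c₃),(d₁,d₂,d₃)] = (μ[a₁,b₂,c₃,d₁], μ[a₂,b₃,c₁,d₂], μ[a₃,b₁,c₂,d₃]) is totally associative. -/
/-- The Post-like hetero cube operation on G³ induced by a 4-ary operation μ: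
μ'[(a₁,a₂,a₃),(b₁,b₂,b₃),(c₁,c₂,c₃),(d₁,d₂,d₃)] =
  (μ[a₁,b₂,c₃,d₁], μ[a₂,b₃,c₁,d₂], μ[a₃,b₁,c₂,d₃]). -/
def postCube {G : Type*} (μ : G → G → G → G → G)
    (A B C D : G × G × G) : G × G × G :=
  (μ A.1 B.2.1 C.2.2 D.1, μ A.2.1 B.2.2 C.1 D.2.1, μ A.2.2 B.1 C.2.1 D.2.2)

/-- if (G, μ) is a 4-ary semigroup, the Post-like hetero cube
operation on G³ is totally associative. -/
theorem post_cube_totAssoc {G : Type*} (μ : G → G → G → G → G)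
    (hassoc : ∀ t₁ t₂ t₃ t₄ t₅ t₆ t₇ : G,
      μ (μ t₁ t₂ t₃ t₄) t₅ t₆ t₇ = μ t₁ (μ t₂ t₃ t₄ t₅) t₆ t₇ ∧
      μ t₁ (μ t₂ t₃ t₄ t₅) t₆ t₇ = μ t₁ t₂ (μ t₃ t₄ t₅ t₆) t₇ ∧
      μ t₁ t₂ (μ t₃ t₄ t₅ t₆) t₇ = μ t₁ t₂ t₃ (μ t₄ t₅ t₆ t₇)) :
    ∀ A B C D E F H : G × G × G,
      postCube μ (postCube μ A B C D) E F H =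
        postCube μ A (postCube μ B C D E) F H ∧
      postCube μ A (postCube μ B C D E) F H =
        postCube μ A B (postCube μ C D E F) H ∧
      postCube μ A B (postCube μ C D E F) H =
        postCube μ A B C (postCube μ D E F H) := by
  intro A B C D E F H
  have h1 : ∀ t₁ t₂ t₃ t₄ t₅ t₆ t₇ : G,
      μ (μ t₁ t₂ t₃ t₄) t₅ t₆ t₇ = μ t₁ (μ t₂ t₃ t₄ t₅) t₆ t₇ :=
    fun a b c d e f g => (hassoc a b c d e f g).1
  have h2 : ∀ t₁ t₂ t₃ t₄ t₅ t₆ t₇ : G,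
      μ t₁ (μ t₂ t₃ t₄ t₅) t₆ t₇ = μ t₁ t₂ (μ t₃ t₄ t₅ t₆) t₇ :=
    fun a b c d e f g => (hassoc a b c d e f g).2.1
  have h3 : ∀ t₁ t₂ t₃ t₄ t₅ t₆ t₇ : G,
      μ t₁ t₂ (μ t₃ t₄ t₅ t₆) t₇ = μ t₁ t₂ t₃ (μ t₄ t₅ t₆ t₇) :=
    fun a b c d e f g => (hassoc a b c d e f g).2.2
  refine ⟨?_, ?_, ?_⟩ <;> simp only [postCube, Prod.mk.injEq]
  · exact ⟨h1 _ _ _ _ _ _ _, h1 _ _ _ _ _ _ _, h1 _ _ _ _ _ _ _⟩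
  · exact ⟨h2 _ _ _ _ _ _ _, h2 _ _ _ _ _ _ _, h2 _ _ _ _ _ _ _⟩
  · exact ⟨h3 _ _ _ _ _ _ _, h3 _ _ _ _ _ _ _, h3 _ _ _ _ _ _ _⟩
end

section
/- The set of purely imaginary fractions {i·a/b : a, b odd integers} with ternary addition ν[x,y,z] = x+y+z and ternary multiplication μ[x,y,z] = xyz forms a zeroless nonunital (3,3)-field: both operations are closed, totally associative, commutative, distributive, every element x = ia/b has additive querelement -ia/b and multiplicative querelement -ib/a, and the structure has neither zero nor identity. -/
/-!
Write the elements as `q * I` with `q = a / b` an odd fraction. Odd fractions are closed under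
negation, inversion, products and sums of three terms (a sum of three odd numerators is odd), so
closure follows from `(p I)(q I)(r I) = -(p q r) I`, `-(q I) = (-q) I` and `(q I)⁻¹ = (-q⁻¹) I`.
There is no zero because `z I I = -z ≠ z`, and no identity because `e e I = I` with `e = q I`
would give `q² = -1`, i.e. `a² + b² = 0`.
-/

/-- The set of purely imaginary fractions i·a/b with a, b odd integers. -/
def ImOddFrac : Set ℂ :=
  {z : ℂ | ∃ a b : ℤ, Odd a ∧ Odd b ∧ z = ((a : ℂ) / (b : ℂ)) * Complex.I}

open Complex

lemma Odd.intCast_ne_zero {R : Type*} [AddGroupWithOne R] [CharZero R] {a : ℤ} (ha : Odd a) :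
    (a : R) ≠ 0 :=
  Int.cast_ne_zero.2 fun h0 => by simp [h0] at ha

def oddFracs (K : Type*) [Field K] : Set K :=
  {q | ∃ a b : ℤ, Odd a ∧ Odd b ∧ q = a / b}

namespace oddFracs

variable {K : Type*} [Field K] {p q r : K}

lemma ne_zero [CharZero K] (hq : q ∈ oddFracs K) : q ≠ 0 := by
  obtain ⟨a, b, ha, hb, rfl⟩ := hq
  exact div_ne_zero ha.intCast_ne_zero hb.intCast_ne_zero

lemma add_add_mem [CharZero K] (hp : p ∈ oddFracs K) (hq : q ∈ oddFracs K) (hr : r ∈ oddFracs K) :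
    p + q + r ∈ oddFracs K := by
  obtain ⟨a, b, ha, hb, rfl⟩ := hp
  obtain ⟨c, d, hc, hd, rfl⟩ := hq
  obtain ⟨e, f, he, hf, rfl⟩ := hr
  refine ⟨a * d * f + c * b * f + e * b * d, b * d * f,
    (((ha.mul hd).mul hf).add_odd ((hc.mul hb).mul hf)).add_odd ((he.mul hb).mul hd),
    (hb.mul hd).mul hf, ?_⟩
  have := hb.intCast_ne_zero (R := K)
  have := hd.intCast_ne_zero (R := K)
  have := hf.intCast_ne_zero (R := K)
  push_cast
  field_simp

lemma mul_mem (hp : p ∈ oddFracs K) (hq : q ∈ oddFracs K) : p * q ∈ oddFracs K := by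
  obtain ⟨a, b, ha, hb, rfl⟩ := hp
  obtain ⟨c, d, hc, hd, rfl⟩ := hq
  exact ⟨a * c, b * d, ha.mul hc, hb.mul hd, by push_cast; ring⟩

lemma neg_mem (hq : q ∈ oddFracs K) : -q ∈ oddFracs K := by
  obtain ⟨a, b, ha, hb, rfl⟩ := hq
  exact ⟨-a, b, ha.neg, hb, by push_cast; ring⟩

lemma inv_mem (hq : q ∈ oddFracs K) : q⁻¹ ∈ oddFracs K := by
  obtain ⟨a, b, ha, hb, rfl⟩ := hq
  exact ⟨b, a, hb, ha, inv_div _ _⟩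

lemma sq_ne_neg_one [CharZero K] (hq : q ∈ oddFracs K) : q ^ 2 ≠ -1 := by
  obtain ⟨a, b, ha, hb, rfl⟩ := hq
  intro h
  have hsum : ((a ^ 2 + b ^ 2 : ℤ) : K) = 0 := by
    have := hb.intCast_ne_zero (R := K)
    field_simp at h
    push_cast
    linear_combination h
  have ha0 : a = 0 := by nlinarith [sq_nonneg a, sq_nonneg b, Int.cast_eq_zero.1 hsum]
  simp [ha0] at ha

end oddFracs

namespace ImOddFrac

lemma mem_iff {x : ℂ} : x ∈ ImOddFrac ↔ ∃ q ∈ oddFracs ℂ, x = q * I :=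
  ⟨fun ⟨a, b, ha, hb, hx⟩ => ⟨_, ⟨a, b, ha, hb, rfl⟩, hx⟩,
    fun ⟨_, ⟨a, b, ha, hb, hq⟩, hx⟩ => ⟨a, b, ha, hb, hq ▸ hx⟩⟩

lemma I_mem : I ∈ ImOddFrac := ⟨1, 1, odd_one, odd_one, by norm_num⟩

lemma ne_zero {x : ℂ} (hx : x ∈ ImOddFrac) : x ≠ 0 := by
  obtain ⟨q, hq, rfl⟩ := mem_iff.1 hx
  exact mul_ne_zero (oddFracs.ne_zero hq) I_ne_zero

lemma add_add_mem {x y z : ℂ} (hx : x ∈ ImOddFrac) (hy : y ∈ ImOddFrac) (hz : z ∈ ImOddFrac) :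
    x + y + z ∈ ImOddFrac := by
  obtain ⟨p, hp, rfl⟩ := mem_iff.1 hx
  obtain ⟨q, hq, rfl⟩ := mem_iff.1 hy
  obtain ⟨r, hr, rfl⟩ := mem_iff.1 hz
  exact mem_iff.2 ⟨p + q + r, oddFracs.add_add_mem hp hq hr, by ring⟩

lemma mul_mul_mem {x y z : ℂ} (hx : x ∈ ImOddFrac) (hy : y ∈ ImOddFrac) (hz : z ∈ ImOddFrac) :
    x * y * z ∈ ImOddFrac := by
  obtain ⟨p, hp, rfl⟩ := mem_iff.1 hx
  obtain ⟨q, hq, rfl⟩ := mem_iff.1 hy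
  obtain ⟨r, hr, rfl⟩ := mem_iff.1 hz
  have hpqr := oddFracs.mul_mem (oddFracs.mul_mem hp hq) hr
  refine mem_iff.2 ⟨-(p * q * r), oddFracs.neg_mem hpqr, ?_⟩
  linear_combination p * q * r * I * I_sq

lemma neg_mem {x : ℂ} (hx : x ∈ ImOddFrac) : -x ∈ ImOddFrac := by
  obtain ⟨q, hq, rfl⟩ := mem_iff.1 hx
  exact mem_iff.2 ⟨-q, oddFracs.neg_mem hq, by ring⟩

lemma inv_mem {x : ℂ} (hx : x ∈ ImOddFrac) : x⁻¹ ∈ ImOddFrac := by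
  obtain ⟨q, hq, rfl⟩ := mem_iff.1 hx
  refine mem_iff.2 ⟨-q⁻¹, oddFracs.neg_mem (oddFracs.inv_mem hq), ?_⟩
  rw [mul_inv, inv_I]
  ring

lemma mul_I_mul_I_ne {x : ℂ} (hx : x ∈ ImOddFrac) : x * I * I ≠ x := by
  intro h
  have hx0 : x = 0 := by linear_combination (-1 / 2 : ℂ) * h + (x / 2) * I_sq
  exact ne_zero hx hx0

lemma mul_self_mul_I_ne {x : ℂ} (hx : x ∈ ImOddFrac) : x * x * I ≠ I := by
  obtain ⟨q, hq, rfl⟩ := mem_iff.1 hx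
  intro h
  refine oddFracs.sq_ne_neg_one hq (mul_right_cancel₀ I_ne_zero ?_)
  linear_combination (-1 : ℂ) * h + q ^ 2 * I * I_sq

end ImOddFrac

/-- the set {i·a/b : a,b odd integers} with ternary addition
ν[x,y,z] = x+y+z and ternary multiplication μ[x,y,z] = xyz is a zeroless
nonunital (3,3)-field: both operations are closed, totally associative,
commutative and distributive; every element has an additive querelement (-x)
and a multiplicative querelement (1/x = -ib/a), and there is neither a zero
nor an identity. -/
theorem imOddFrac_33_field :
    -- closure of the ternary addition and multiplication
    (∀ x ∈ ImOddFrac, ∀ y ∈ ImOddFrac, ∀ z ∈ ImOddFrac, x + y + z ∈ ImOddFrac) ∧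
    (∀ x ∈ ImOddFrac, ∀ y ∈ ImOddFrac, ∀ z ∈ ImOddFrac, x * y * z ∈ ImOddFrac) ∧
    -- total associativity
    (∀ a b c d e : ℂ, (a + b + c) + d + e = a + (b + c + d) + e ∧
      a + (b + c + d) + e = a + b + (c + d + e)) ∧
    (∀ a b c d e : ℂ, (a * b * c) * d * e = a * (b * c * d) * e ∧
      a * (b * c * d) * e = a * b * (c * d * e)) ∧
    -- commutativity
    (∀ a b c : ℂ, a + b + c = b + a + c ∧ a + b + c = a + c + b) ∧
    (∀ a b c : ℂ, a * b * c = b * a * c ∧ a * b * c = a * c * b) ∧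
    -- distributivity in all three positions
    (∀ x y z u v : ℂ, (x + y + z) * u * v = x * u * v + y * u * v + z * u * v ∧
      u * (x + y + z) * v = u * x * v + u * y * v + u * z * v ∧
      u * v * (x + y + z) = u * v * x + u * v * y + u * v * z) ∧
    -- additive and multiplicative querelements
    (∀ x ∈ ImOddFrac, (-x) ∈ ImOddFrac ∧ x + x + (-x) = x) ∧
    (∀ x ∈ ImOddFrac, x⁻¹ ∈ ImOddFrac ∧
      x * x * x⁻¹ = x ∧ x * x⁻¹ * x = x ∧ x⁻¹ * x * x = x) ∧
    -- zeroless
    (¬∃ z ∈ ImOddFrac, ∀ x ∈ ImOddFrac, ∀ y ∈ ImOddFrac, z * x * y = z) ∧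
    -- nonunital
    (¬∃ e ∈ ImOddFrac, ∀ g ∈ ImOddFrac, e * e * g = g) := by
  refine ⟨fun x hx y hy z hz => ImOddFrac.add_add_mem hx hy hz,
    fun x hx y hy z hz => ImOddFrac.mul_mul_mem hx hy hz,
    fun a b c d e => ⟨by ring, by ring⟩, fun a b c d e => ⟨by ring, by ring⟩,
    fun a b c => ⟨by ring, by ring⟩, fun a b c => ⟨by ring, by ring⟩,
    fun x y z u v => ⟨by ring, by ring, by ring⟩,
    fun x hx => ⟨ImOddFrac.neg_mem hx, by ring⟩, fun x hx => ?_, ?_, ?_⟩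
  · have hx0 := ImOddFrac.ne_zero hx
    exact ⟨ImOddFrac.inv_mem hx, mul_inv_cancel_right₀ hx0 x,
      by rw [mul_inv_cancel₀ hx0, one_mul], by rw [inv_mul_cancel₀ hx0, one_mul]⟩
  · rintro ⟨z, hz, h⟩
    exact ImOddFrac.mul_I_mul_I_ne hz (h I ImOddFrac.I_mem I ImOddFrac.I_mem)
  · rintro ⟨e, he, h⟩
    exact ImOddFrac.mul_self_mul_I_ne he (h I ImOddFrac.I_mem)
end
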